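/- arXiv:2503.09253 — 7 statements merged into one kernel-verified Lean document; each statement's English description precedes it below -/
import Mathlib

section
/- Let (X,ρ) be a metric space, S ⊂ X a closed set, and d a metric on S with d ≤ ρ on S × S. Then the function ρ̃(x,y) := min{ρ(x,y), inf over p,q ∈ S of (ρ(x,p) + d(p,q) + ρ(q,y))} is a metric on X satisfying ρ̃ ≤ ρ. -/
/-- `d` is a metric on `X`. -/
def IsMetric {X : Type*} (d : X → X → ℝ) : Prop :=
  (∀ x, d x x = 0) ∧ (∀ x y, d x y = 0 → x = y) ∧ (∀ x y, d x y = d y x) ∧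
    ∀ x y z, d x z ≤ d x y + d y z

/-- The glued function `ρ̃(x,y) = min{ρ(x,y), inf_{p,q ∈ S} (ρ(x,p)+d(p,q)+ρ(q,y))}`
is a metric on `X` with `ρ̃ ≤ ρ`. -/
theorem stmt2 {X : Type*} [MetricSpace X] (S : Set X) (hS : IsClosed S)
    (d : X → X → ℝ)
    (hd0 : ∀ p ∈ S, d p p = 0)
    (hdeq : ∀ p ∈ S, ∀ q ∈ S, d p q = 0 → p = q)
    (hdsymm : ∀ p ∈ S, ∀ q ∈ S, d p q = d q p)
    (hdtri : ∀ p ∈ S, ∀ q ∈ S, ∀ r ∈ S, d p r ≤ d p q + d q r)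
    (hdρ : ∀ p ∈ S, ∀ q ∈ S, d p q ≤ dist p q)
    (ρ' : X → X → ℝ)
    (hρ' : ∀ x y, ρ' x y =
      sInf ({dist x y} ∪ {v | ∃ p ∈ S, ∃ q ∈ S, v = dist x p + d p q + dist q y})) :
    IsMetric ρ' ∧ ∀ x y, ρ' x y ≤ dist x y := by
  set A : X → X → Set ℝ := fun x y =>
    {dist x y} ∪ {v | ∃ p ∈ S, ∃ q ∈ S, v = dist x p + d p q + dist q y} with hAdef
  have hA : ∀ x y, ρ' x y = sInf (A x y) := hρ'
  have dnn : ∀ p ∈ S, ∀ q ∈ S, 0 ≤ d p q := by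
    intro p hp q hq
    have h1 := hdtri p hp q hq p hp
    rw [hd0 p hp, hdsymm q hq p hp] at h1
    linarith
  have hne : ∀ x y : X, (A x y).Nonempty := fun x y => ⟨dist x y, Or.inl rfl⟩
  have hbdd : ∀ x y : X, ∀ a ∈ A x y, (0:ℝ) ≤ a := by
    intro x y a ha
    rcases ha with ha | ⟨p, hp, q, hq, rfl⟩
    · simp only [Set.mem_singleton_iff] at ha
      subst ha; exact dist_nonneg
    · have h1 := dnn p hp q hq
      have h2 : (0:ℝ) ≤ dist x p := dist_nonneg
      have h3 : (0:ℝ) ≤ dist q y := dist_nonneg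
      linarith
  have hbdd' : ∀ x y : X, BddBelow (A x y) := fun x y => ⟨0, fun a ha => hbdd x y a ha⟩
  have hmem_le : ∀ x y a, a ∈ A x y → ρ' x y ≤ a := by
    intro x y a ha; rw [hA x y]; exact csInf_le (hbdd' x y) ha
  have hle : ∀ x y, ρ' x y ≤ dist x y := fun x y => hmem_le x y _ (Or.inl rfl)
  have hnn : ∀ x y, 0 ≤ ρ' x y := by
    intro x y; rw [hA x y]; exact le_csInf (hne x y) (hbdd x y)
  -- symmetry
  have hsymm_le : ∀ x y, ρ' x y ≤ ρ' y x := by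
    intro x y
    rw [hA y x]
    apply le_csInf (hne y x)
    intro b hb
    rcases hb with hb | ⟨p, hp, q, hq, rfl⟩
    · simp only [Set.mem_singleton_iff] at hb
      subst hb; rw [dist_comm]; exact hle x y
    · have : dist x q + d q p + dist p y ∈ A x y := Or.inr ⟨q, hq, p, hp, rfl⟩
      calc ρ' x y ≤ dist x q + d q p + dist p y := hmem_le x y _ this
        _ = dist y p + d p q + dist q x := by
            rw [hdsymm q hq p hp, dist_comm x q, dist_comm p y]; ring
  have hsymm : ∀ x y, ρ' x y = ρ' y x := fun x y =>
    le_antisymm (hsymm_le x y) (hsymm_le y x)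
  -- zero on diagonal
  have hzero : ∀ x, ρ' x x = 0 :=
    fun x => le_antisymm (by simpa using hle x x) (hnn x x)
  -- triangle
  have htri : ∀ x y z, ρ' x z ≤ ρ' x y + ρ' y z := by
    intro x y z
    have key : ∀ a ∈ A x y, ∀ b ∈ A y z, ρ' x z ≤ a + b := by
      intro a ha b hb
      rcases ha with ha | ⟨p, hp, q, hq, rfl⟩ <;>
        rcases hb with hb | ⟨p', hp', q', hq', rfl⟩
      · simp only [Set.mem_singleton_iff] at ha hb
        subst ha; subst hb
        exact le_trans (hle x z) (dist_triangle x y z)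
      · simp only [Set.mem_singleton_iff] at ha
        subst ha
        have hm : dist x p' + d p' q' + dist q' z ∈ A x z := Or.inr ⟨p', hp', q', hq', rfl⟩
        have := hmem_le x z _ hm
        have htd := dist_triangle x y p'
        linarith
      · simp only [Set.mem_singleton_iff] at hb
        subst hb
        have hm : dist x p + d p q + dist q z ∈ A x z := Or.inr ⟨p, hp, q, hq, rfl⟩
        have := hmem_le x z _ hm
        have htd := dist_triangle q y z
        linarith
      · have hm : dist x p + d p q' + dist q' z ∈ A x z := Or.inr ⟨p, hp, q', hq', rfl⟩
        have h1 := hmem_le x z _ hm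
        have h2 := hdtri p hp q hq q' hq'
        have h3 := hdtri q hq p' hp' q' hq'
        have h4 := hdρ q hq p' hp'
        have h5 := dist_triangle q y p'
        linarith
    have step1 : ∀ a ∈ A x y, ρ' x z - a ≤ ρ' y z := by
      intro a ha
      rw [hA y z]
      apply le_csInf (hne y z)
      intro b hb
      linarith [key a ha b hb]
    have step2 : ρ' x z - ρ' y z ≤ ρ' x y := by
      rw [hA x y]
      apply le_csInf (hne x y)
      intro a ha
      linarith [step1 a ha]
    linarith
  -- separation
  have hsep : ∀ x y, ρ' x y = 0 → x = y := by
    intro x y h0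
    by_cases hd0' : dist x y = 0
    · exact dist_eq_zero.mp hd0'
    · have δpos : 0 < dist x y := lt_of_le_of_ne dist_nonneg (Ne.symm hd0')
      have key : ∀ ε > (0:ℝ), ∃ p ∈ S, ∃ q ∈ S, dist x p + d p q + dist q y < ε := by
        intro ε hε
        have hlt : sInf (A x y) < min ε (dist x y) := by
          rw [← hA, h0]; exact lt_min hε δpos
        obtain ⟨a, ha, halt⟩ := exists_lt_of_csInf_lt (hne x y) hlt
        rcases ha with ha | ⟨p, hp, q, hq, rfl⟩
        · simp only [Set.mem_singleton_iff] at ha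
          subst ha
          exact absurd halt (not_lt.mpr (min_le_right _ _))
        · exact ⟨p, hp, q, hq, lt_of_lt_of_le halt (min_le_left _ _)⟩
      have hxS : x ∈ S := by
        rw [← hS.closure_eq]
        rw [Metric.mem_closure_iff]
        intro ε hε
        obtain ⟨p, hp, q, hq, hlt⟩ := key ε hε
        refine ⟨p, hp, ?_⟩
        have h1 := dnn p hp q hq
        have h2 : (0:ℝ) ≤ dist q y := dist_nonneg
        linarith
      have hyS : y ∈ S := by
        rw [← hS.closure_eq]
        rw [Metric.mem_closure_iff]
        intro ε hε
        obtain ⟨p, hp, q, hq, hlt⟩ := key ε hε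
        refine ⟨q, hq, ?_⟩
        have h1 := dnn p hp q hq
        have h2 : (0:ℝ) ≤ dist x p := dist_nonneg
        rw [dist_comm]
        linarith
      have hdxy : d x y ≤ 0 := by
        by_contra h
        push_neg at h
        obtain ⟨p, hp, q, hq, hlt⟩ := key (d x y) h
        have h1 := hdtri x hxS q hq y hyS
        have h2 := hdtri x hxS p hp q hq
        have h3 := hdρ x hxS p hp
        have h4 := hdρ q hq y hyS
        linarith
      exact hdeq x hxS y hyS (le_antisymm hdxy (dnn x hxS y hyS))
  exact ⟨⟨hzero, hsep, hsymm, htri⟩, hle⟩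
end

section
/- Let (X,ρ) be a metric space, S ⊂ X a closed set, and d a metric on S with L⁻¹·ρ ≤ d ≤ ρ on S × S for some L ≥ 1. Then the glued metric ρ̃(x,y) := min{ρ(x,y), inf over p,q ∈ S of (ρ(x,p) + d(p,q) + ρ(q,y))} is L-bi-Lipschitz equivalent to ρ, i.e., L⁻¹·ρ(x,y) ≤ ρ̃(x,y) ≤ ρ(x,y) ≤ L·ρ̃(x,y) for all x,y ∈ X. -/
/-- If `L⁻¹ ρ ≤ d ≤ ρ` on `S × S`, then the glued metric `ρ̃` determined by `ρ`
and `d` is `L`-bi-Lipschitz equivalent to `ρ`: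
`L⁻¹ ρ(x,y) ≤ ρ̃(x,y) ≤ ρ(x,y) ≤ L ρ̃(x,y)` for all `x, y`. -/
theorem stmt3 {X : Type*} [MetricSpace X] (S : Set X) (hS : IsClosed S)
    (L : ℝ) (hL : 1 ≤ L)
    (d : X → X → ℝ)
    (hd0 : ∀ p ∈ S, d p p = 0)
    (hdeq : ∀ p ∈ S, ∀ q ∈ S, d p q = 0 → p = q)
    (hdsymm : ∀ p ∈ S, ∀ q ∈ S, d p q = d q p)
    (hdtri : ∀ p ∈ S, ∀ q ∈ S, ∀ r ∈ S, d p r ≤ d p q + d q r)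
    (hlow : ∀ p ∈ S, ∀ q ∈ S, L⁻¹ * dist p q ≤ d p q)
    (hdρ : ∀ p ∈ S, ∀ q ∈ S, d p q ≤ dist p q)
    (ρ' : X → X → ℝ)
    (hρ' : ∀ x y, ρ' x y =
      sInf ({dist x y} ∪ {v | ∃ p ∈ S, ∃ q ∈ S, v = dist x p + d p q + dist q y})) :
    ∀ x y : X, L⁻¹ * dist x y ≤ ρ' x y ∧ ρ' x y ≤ dist x y ∧ dist x y ≤ L * ρ' x y := by
  intro x y
  have hL0 : 0 < L := lt_of_lt_of_le one_pos hL
  have hLinv : L⁻¹ ≤ 1 := inv_le_one_of_one_le₀ hL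
  have hLinv0 : 0 ≤ L⁻¹ := inv_nonneg.mpr hL0.le
  have hlb : ∀ v ∈ ({dist x y} ∪ {v | ∃ p ∈ S, ∃ q ∈ S, v = dist x p + d p q + dist q y}),
      L⁻¹ * dist x y ≤ v := by
    intro v hv
    rcases hv with hv | ⟨p, hp, q, hq, rfl⟩
    · rcases hv with rfl
      calc L⁻¹ * dist x y ≤ 1 * dist x y := by
            exact mul_le_mul_of_nonneg_right hLinv dist_nonneg
        _ = dist x y := one_mul _
    · have h1 : dist x y ≤ dist x p + dist p q + dist q y := dist_triangle4 x p q y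
      calc L⁻¹ * dist x y ≤ L⁻¹ * (dist x p + dist p q + dist q y) :=
            mul_le_mul_of_nonneg_left h1 hLinv0
        _ = L⁻¹ * dist x p + L⁻¹ * dist p q + L⁻¹ * dist q y := by ring
        _ ≤ dist x p + d p q + dist q y := by
            gcongr
            · calc L⁻¹ * dist x p ≤ 1 * dist x p :=
                  mul_le_mul_of_nonneg_right hLinv dist_nonneg
                _ = dist x p := one_mul _
            · exact hlow p hp q hq
            · calc L⁻¹ * dist q y ≤ 1 * dist q y :=
                  mul_le_mul_of_nonneg_right hLinv dist_nonneg
                _ = dist q y := one_mul _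
  have hbdd : BddBelow ({dist x y} ∪ {v | ∃ p ∈ S, ∃ q ∈ S, v = dist x p + d p q + dist q y}) :=
    ⟨L⁻¹ * dist x y, hlb⟩
  have hmem : dist x y ∈ ({dist x y} ∪ {v | ∃ p ∈ S, ∃ q ∈ S, v = dist x p + d p q + dist q y}) :=
    Or.inl rfl
  have h1 : L⁻¹ * dist x y ≤ ρ' x y := by
    rw [hρ']
    exact le_csInf ⟨_, hmem⟩ hlb
  have h2 : ρ' x y ≤ dist x y := by
    rw [hρ']
    exact csInf_le hbdd hmem
  refine ⟨h1, h2, ?_⟩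
  calc dist x y = L * (L⁻¹ * dist x y) := by field_simp
    _ ≤ L * ρ' x y := mul_le_mul_of_nonneg_left h1 hL0.le
end

section
/- Let (X,ρ) be a metric space, S ⊂ X a closed set, and d a metric on S with d ≤ ρ on S × S such that (S,d) is a discrete metric space (i.e., uniformly discrete: there is δ > 0 with d(p,q) ≥ δ for all distinct p,q ∈ S). Then the identity map from (X,ρ) to (X,ρ̃), where ρ̃ is the glued metric determined by ρ and d, is a local isometry: every point of X has a neighborhood on which ρ̃ = ρ. -/
/-- If `(S,d)` is uniformly discrete and `d ≤ ρ` on `S × S`, then the identity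
from `(X,ρ)` to `(X,ρ̃)` is a local isometry: every point has a neighborhood on
which the glued metric `ρ̃` agrees with `ρ`. -/
theorem stmt4 {X : Type*} [MetricSpace X] (S : Set X) (hS : IsClosed S)
    (d : X → X → ℝ)
    (hd0 : ∀ p ∈ S, d p p = 0)
    (hdeq : ∀ p ∈ S, ∀ q ∈ S, d p q = 0 → p = q)
    (hdsymm : ∀ p ∈ S, ∀ q ∈ S, d p q = d q p)
    (hdtri : ∀ p ∈ S, ∀ q ∈ S, ∀ r ∈ S, d p r ≤ d p q + d q r)
    (hdρ : ∀ p ∈ S, ∀ q ∈ S, d p q ≤ dist p q)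
    (δ : ℝ) (hδ : 0 < δ)
    (hdisc : ∀ p ∈ S, ∀ q ∈ S, p ≠ q → δ ≤ d p q)
    (ρ' : X → X → ℝ)
    (hρ' : ∀ x y, ρ' x y =
      sInf ({dist x y} ∪ {v | ∃ p ∈ S, ∃ q ∈ S, v = dist x p + d p q + dist q y})) :
    ∀ x : X, ∃ U ∈ nhds x, ∀ y ∈ U, ∀ z ∈ U, ρ' y z = dist y z := by
  intro x
  refine ⟨Metric.ball x (δ/4), Metric.ball_mem_nhds x (by linarith), ?_⟩
  intro y hy z hz
  rw [hρ' y z]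
  have hyz : dist y z < δ := by
    have := dist_triangle_right y z x
    rw [Metric.mem_ball] at hy hz
    linarith
  have hlb : ∀ v ∈ ({dist y z} ∪
      {v | ∃ p ∈ S, ∃ q ∈ S, v = dist y p + d p q + dist q z}), dist y z ≤ v := by
    rintro v (hv | ⟨p, hp, q, hq, rfl⟩)
    · simp_all
    · by_cases hpq : p = q
      · subst hpq
        rw [hd0 p hp]
        have := dist_triangle y p z
        linarith
      · have h1 : δ ≤ d p q := hdisc p hp q hq hpq
        have h2 : (0:ℝ) ≤ dist y p := dist_nonneg
        have h3 : (0:ℝ) ≤ dist q z := dist_nonneg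
        linarith
  refine le_antisymm (csInf_le ⟨dist y z, hlb⟩ (Or.inl rfl)) (le_csInf ⟨_, Or.inl rfl⟩ hlb)
end

section
/- Let (X,d_g) be a compact metric space in which closed balls are compact, d another metric on X such that the identity (X,d_g) → (X,d) is continuous and an η-quasisymmetry, and ε > 0. Suppose (X,d_g) is a length space. Then the function λ_ε(p) := (max over q ∈ closed ball B̄(p,ε) of d(p,q))/ε is continuous on X. -/
open Metric Set

/-- For metric spaces this is equivalent to being a length space: reparametrize curves of
nearly minimal length proportionally to arc length. -/
def HasAlmostGeodesics (X : Type*) [PseudoMetricSpace X] : Prop :=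
  ∀ (x y : X) (δ : ℝ), 0 < δ → ∃ f : ℝ → X, f 0 = x ∧ f 1 = y ∧
    ∀ s ∈ Icc (0:ℝ) 1, ∀ t ∈ Icc (0:ℝ) 1, dist (f s) (f t) ≤ (dist x y + δ) * |s - t|

namespace HasAlmostGeodesics

variable {X : Type*} [PseudoMetricSpace X]

theorem exists_dist_le (hX : HasAlmostGeodesics X) {x y : X} {r δ : ℝ} (hr₀ : 0 ≤ r)
    (hr : r ≤ dist x y) (hδ : 0 < δ) : ∃ z, dist x z ≤ r ∧ dist z y ≤ dist x y - r + δ := by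
  obtain ⟨f, hf0, hf1, hf⟩ := hX x y δ hδ
  set L := dist x y + δ
  have hL : 0 < L := by positivity
  have ht : r / L ∈ Icc (0:ℝ) 1 := ⟨by positivity, (div_le_one hL).2 (by linarith)⟩
  refine ⟨f (r / L), ?_, ?_⟩
  · calc dist x (f (r / L)) ≤ L * |0 - r / L| := hf0 ▸ hf 0 (by simp) _ ht
      _ = r := by rw [zero_sub, abs_neg, abs_of_nonneg ht.1]; field_simp
  · calc dist (f (r / L)) y = dist y (f (r / L)) := dist_comm _ _
      _ ≤ L * |1 - r / L| := hf1 ▸ hf 1 (by simp) _ ht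
      _ = dist x y - r + δ := by rw [abs_of_nonneg (by linarith [ht.2])]; field_simp; ring

/-- In the paper's notation: `B̄(p, ε) ⊆ N(B̄(p', ε), d(p, p') + δ)`. -/
theorem exists_mem_closedBall_dist_le (hX : HasAlmostGeodesics X) {p p' q : X} {ε δ : ℝ}
    (hq : q ∈ closedBall p ε) (hδ : 0 < δ) :
    ∃ q' ∈ closedBall p' ε, dist q q' ≤ dist p p' + δ := by
  rw [mem_closedBall'] at hq
  by_cases hq' : dist p' q ≤ ε
  · exact ⟨q, mem_closedBall'.2 hq', by simp; positivity⟩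
  obtain ⟨z, hz, hzq⟩ :=
    hX.exists_dist_le (x := p') (y := q) (dist_nonneg.trans hq) (by linarith) hδ
  refine ⟨z, mem_closedBall'.2 hz, ?_⟩
  calc dist q z = dist z q := dist_comm _ _
    _ ≤ dist p' q - ε + δ := hzq
    _ ≤ dist p p' + δ := by linarith [dist_triangle p' p q, dist_comm p p']

end HasAlmostGeodesics

theorem Metric.uniformContinuous_of_le_add {α : Type*} [PseudoMetricSpace α] {f : α → ℝ}
    (h : ∀ e > 0, ∃ ρ > 0, ∀ x y, dist x y < ρ → f x ≤ f y + e) : UniformContinuous f := by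
  refine Metric.uniformContinuous_iff.2 fun e he => ?_
  obtain ⟨ρ, hρ, hf⟩ := h (e / 2) (by positivity)
  refine ⟨ρ, hρ, fun {x y} hxy => ?_⟩
  rw [Real.dist_eq, abs_sub_lt_iff]
  constructor <;> linarith [hf x y hxy, hf y x (by rwa [dist_comm])]

theorem uniformContinuous_csSup_image {X Y : Type*} [PseudoMetricSpace X] [PseudoMetricSpace Y]
    {g : X → Y → ℝ} (hg : UniformContinuous fun pq : X × Y => g pq.1 pq.2)
    (hbdd : BddAbove (range fun pq : X × Y => g pq.1 pq.2)) {A : X → Set Y}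
    (hA : ∀ p, (A p).Nonempty)
    (hAclose : ∀ δ > 0, ∃ ρ > 0, ∀ p p', dist p p' < ρ → ∀ q ∈ A p, ∃ q' ∈ A p', dist q q' < δ) :
    UniformContinuous fun p => sSup (g p '' A p) := by
  refine Metric.uniformContinuous_of_le_add fun e he => ?_
  obtain ⟨δ, hδ, hgδ⟩ := Metric.uniformContinuous_iff.1 hg e he
  obtain ⟨ρ, hρ, hAρ⟩ := hAclose δ hδ
  refine ⟨min ρ δ, lt_min hρ hδ, fun p p' hpp' => ?_⟩
  refine csSup_le ((hA p).image _) (forall_mem_image.2 fun q hq => ?_)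
  obtain ⟨q', hq', hqq'⟩ := hAρ p p' (hpp'.trans_le (min_le_left _ _)) q hq
  have hclose : dist (g p q) (g p' q') < e :=
    @hgδ (p, q) (p', q') (max_lt (hpp'.trans_le (min_le_right _ _)) hqq')
  have hle : g p' q' ≤ sSup (g p' '' A p') :=
    le_csSup (hbdd.mono (image_subset_iff.2 fun y _ => mem_range_self (p', y))) (mem_image_of_mem _ hq')
  linarith [(abs_sub_lt_iff.1 (Real.dist_eq _ _ ▸ hclose)).1]

theorem stmt7_general {X : Type*} [MetricSpace X] [CompactSpace X]
    (d : X → X → ℝ)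
    (hcont : Continuous fun pq : X × X => d pq.1 pq.2)
    (hlen : ∀ (x y : X) (δ : ℝ), 0 < δ → ∃ f : ℝ → X, f 0 = x ∧ f 1 = y ∧
      ∀ s ∈ Set.Icc (0:ℝ) 1, ∀ t ∈ Set.Icc (0:ℝ) 1,
        dist (f s) (f t) ≤ (dist x y + δ) * |s - t|)
    (ε : ℝ) (hε : 0 < ε) :
    Continuous fun p : X =>
      (sSup {v | ∃ q ∈ Metric.closedBall p ε, v = d p q}) / ε := by
  have hballs : ∀ δ > 0, ∃ ρ > 0, ∀ p p' : X, dist p p' < ρ →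
      ∀ q ∈ closedBall p ε, ∃ q' ∈ closedBall p' ε, dist q q' < δ := fun δ hδ =>
    ⟨δ / 2, by positivity, fun p p' hpp' q hq => by
      obtain ⟨q', hq', hqq'⟩ :=
        HasAlmostGeodesics.exists_mem_closedBall_dist_le hlen (p' := p') hq (half_pos hδ)
      exact ⟨q', hq', by linarith⟩⟩
  have hsup := uniformContinuous_csSup_image (CompactSpace.uniformContinuous_of_continuous hcont)
    (isCompact_range hcont).bddAbove (fun p => ⟨p, mem_closedBall_self hε.le⟩) hballs
  have hset : ∀ p, {v | ∃ q ∈ closedBall p ε, v = d p q} = d p '' closedBall p ε := fun p => by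
    ext v; simp [eq_comm]
  simp_rw [hset]
  exact hsup.continuous.div_const ε

/-- The distortion function `λ_ε(p) = ε⁻¹ max{d(p,q) : q ∈ B̄(p,ε)}` is
continuous, when `(X,d_g)` is a compact length space and the identity
`(X,d_g) → (X,d)` is a continuous `η`-quasisymmetry. -/
theorem stmt7 {X : Type*} [MetricSpace X] [CompactSpace X]
    (d : X → X → ℝ) (hd : IsMetric d)
    (hcont : Continuous fun pq : X × X => d pq.1 pq.2)
    (η : ℝ → ℝ)
    (hqs : ∀ p q s : X, q ≠ s → d p q ≤ η (dist p q / dist q s) * d q s)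
    (hlen : ∀ (x y : X) (δ : ℝ), 0 < δ → ∃ f : ℝ → X, f 0 = x ∧ f 1 = y ∧
      ∀ s ∈ Set.Icc (0:ℝ) 1, ∀ t ∈ Set.Icc (0:ℝ) 1,
        dist (f s) (f t) ≤ (dist x y + δ) * |s - t|)
    (ε : ℝ) (hε : 0 < ε) :
    Continuous fun p : X =>
      (sSup {v | ∃ q ∈ Metric.closedBall p ε, v = d p q}) / ε :=
  stmt7_general d hcont hlen ε hε
end

section
/- Let X be a set with metrics d_g and d such that the identity (X,d_g) → (X,d) is an η-quasisymmetry, let ε > 0 and λ_ε(p) := ε⁻¹·max{d(p,q) : d_g(p,q) ≤ ε} (the maximum assumed attained). Suppose R ≥ 1 and p,q ∈ X satisfy R⁻¹ε ≤ d_g(p,q) ≤ Rε, and suppose there exist points p', q' with d_g(p,p') = d_g(q,q') = ε. Then C⁻¹·λ_ε(p) ≤ λ_ε(q) ≤ C·λ_ε(p), where C = η(1)·η(R)². -/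
/-- Annular bound: if `R⁻¹ε ≤ d_g(p,q) ≤ Rε` and there are points at exact
`d_g`-distance `ε` from `p` and `q`, then `C⁻¹ λ_ε(p) ≤ λ_ε(q) ≤ C λ_ε(p)` with
`C = η(1) η(R)²`. -/
theorem stmt9 {X : Type*} (d_g d : X → X → ℝ)
    (hg : IsMetric d_g) (hd : IsMetric d)
    (η : ℝ → ℝ) (hη_mono : Monotone η) (hη_pos : ∀ t, 0 < t → 0 < η t)
    (hqs : ∀ p q s : X, q ≠ s → d p q ≤ η (d_g p q / d_g q s) * d q s)
    (ε : ℝ) (hε : 0 < ε) (lam : X → ℝ)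
    (hlam : ∀ p, ∃ q, d_g p q ≤ ε ∧ lam p * ε = d p q ∧
      ∀ q', d_g p q' ≤ ε → d p q' ≤ lam p * ε)
    (R : ℝ) (hR : 1 ≤ R) (p q : X)
    (h1 : R⁻¹ * ε ≤ d_g p q) (h2 : d_g p q ≤ R * ε)
    (p' q' : X) (hp' : d_g p p' = ε) (hq' : d_g q q' = ε) :
    (η 1 * (η R) ^ 2)⁻¹ * lam p ≤ lam q ∧ lam q ≤ η 1 * (η R) ^ 2 * lam p := by
  obtain ⟨hg0, hg1, hgs, hgt⟩ := hg
  obtain ⟨hd0, hd1, hds, hdt⟩ := hd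
  have hdnn : ∀ x y : X, 0 ≤ d x y := by
    intro x y
    nlinarith [hdt x y x, hd0 x, hds x y]
  have hR0 : 0 < R := lt_of_lt_of_le one_pos hR
  have hεR : 0 < R⁻¹ * ε := by positivity
  have hpq0 : 0 < d_g p q := lt_of_lt_of_le hεR h1
  have hpq : p ≠ q := by
    intro h; rw [h, hg0] at hpq0; exact lt_irrefl 0 hpq0
  have hηR : 0 < η R := hη_pos R hR0
  have hη1pos : 0 < η 1 := hη_pos 1 one_pos
  have hpp' : p ≠ p' := by
    intro h; rw [h, hg0] at hp'; linarith
  have hlamnn : ∀ x, 0 ≤ lam x := by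
    intro x
    obtain ⟨a, _, ha, _⟩ := hlam x
    nlinarith [hdnn x a]
  -- η 1 ≥ 1
  have hdpp' : 0 < d p p' := by
    rcases lt_or_eq_of_le (hdnn p p') with h | h
    · exact h
    · exact absurd (hd1 p p' h.symm) hpp'
  have hη1 : 1 ≤ η 1 := by
    have h := hqs p p' p (Ne.symm hpp')
    rw [hgs p' p, hp', div_self (ne_of_gt hε), hds p' p] at h
    nlinarith
  -- key symmetric estimate
  have key : ∀ a b a' : X, a ≠ b → R⁻¹ * ε ≤ d_g a b → d_g a b ≤ R * ε →
      d_g a a' = ε → lam b ≤ η R ^ 2 * lam a := by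
    intro a b a' hab hl hu ha'
    have hab' : 0 < d_g a b := lt_of_lt_of_le hεR hl
    have haa' : a ≠ a' := by
      intro h; rw [h, hg0] at ha'; linarith
    obtain ⟨c, hc1, hc2, _⟩ := hlam b
    obtain ⟨_, _, _, ha3⟩ := hlam a
    have hdba : 0 ≤ d b a := hdnn b a
    -- d b a ≤ η R * (lam a * ε)
    have s1 : d b a ≤ η R * (lam a * ε) := by
      have h := hqs b a a' haa'
      have hratio : d_g b a / d_g a a' ≤ R := by
        rw [ha', div_le_iff₀ hε, hgs b a]
        exact hu
      have hda' : d a a' ≤ lam a * ε := ha3 a' (le_of_eq ha')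
      calc d b a ≤ η (d_g b a / d_g a a') * d a a' := h
        _ ≤ η R * d a a' := mul_le_mul_of_nonneg_right (hη_mono hratio) (hdnn a a')
        _ ≤ η R * (lam a * ε) := mul_le_mul_of_nonneg_left hda' (le_of_lt hηR)
    -- lam b * ε ≤ η R * d b a
    have s2 : lam b * ε ≤ η R * d b a := by
      have h := hqs c b a (Ne.symm hab)
      have hba : 0 < d_g b a := by rw [hgs]; exact hab'
      have hratio : d_g c b / d_g b a ≤ R := by
        rw [div_le_iff₀ hba, hgs c b, hgs b a]
        have h5 : ε ≤ R * d_g a b := by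
          calc ε = R * (R⁻¹ * ε) := by field_simp
            _ ≤ R * d_g a b := by nlinarith
        linarith
      calc lam b * ε = d b c := hc2
        _ = d c b := hds b c
        _ ≤ η (d_g c b / d_g b a) * d b a := h
        _ ≤ η R * d b a := mul_le_mul_of_nonneg_right (hη_mono hratio) hdba
    have h6 : lam b * ε ≤ η R ^ 2 * lam a * ε := by nlinarith
    exact le_of_mul_le_mul_right h6 hε
  have kpq : lam q ≤ η R ^ 2 * lam p := key p q p' hpq h1 h2 hp'
  have kqp : lam p ≤ η R ^ 2 * lam q := by
    refine key q p q' (Ne.symm hpq) ?_ ?_ hq' <;> rw [hgs q p] <;> assumption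
  have hC : 0 < η 1 * η R ^ 2 := by positivity
  have hq0 : 0 ≤ η R ^ 2 * lam q := mul_nonneg (pow_nonneg hηR.le 2) (hlamnn q)
  have hp0 : 0 ≤ η R ^ 2 * lam p := mul_nonneg (pow_nonneg hηR.le 2) (hlamnn p)
  constructor
  · rw [inv_mul_le_iff₀ hC]
    nlinarith
  · nlinarith
end

section
/- Let X be a set with metrics d_g and d such that the identity (X,d_g) → (X,d) is an η-quasisymmetry, ε > 0, and λ_ε(p) := ε⁻¹·max{d(p,q) : d_g(p,q) ≤ ε}. Suppose R ≥ 1 and p,q satisfy d_g(p,q) < Rε, and suppose there exists s ∈ X with (8R)⁻¹ε ≤ d_g(p,s) ≤ 8Rε and (8R)⁻¹ε ≤ d_g(q,s) ≤ 8Rε, and that the annular comparison λ_ε-bound with constant η(1)·η(8R)² holds for pairs at d_g-distance in [(8R)⁻¹ε, 8Rε]. Then C⁻¹·λ_ε(p) ≤ λ_ε(q) ≤ C·λ_ε(p), where C = η(1)²·η(8R)⁴. -/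
/-- Ball bound: if `d_g(p,q) < Rε`, there is an intermediate point `s` in the
shell `[(8R)⁻¹ε, 8Rε]` around both `p` and `q`, and the annular `λ_ε`-comparison
with constant `η(1)η(8R)²` holds on that shell, then
`C⁻¹ λ_ε(p) ≤ λ_ε(q) ≤ C λ_ε(p)` with `C = η(1)² η(8R)⁴`. -/
theorem stmt10 {X : Type*} (d_g d : X → X → ℝ)
    (hg : IsMetric d_g) (hd : IsMetric d)
    (η : ℝ → ℝ) (hη_mono : Monotone η) (hη_pos : ∀ t, 0 < t → 0 < η t)
    (hqs : ∀ p q s : X, q ≠ s → d p q ≤ η (d_g p q / d_g q s) * d q s)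
    (ε : ℝ) (hε : 0 < ε) (lam : X → ℝ)
    (hlam : ∀ p, ∃ q, d_g p q ≤ ε ∧ lam p * ε = d p q ∧
      ∀ q', d_g p q' ≤ ε → d p q' ≤ lam p * ε)
    (R : ℝ) (hR : 1 ≤ R) (p q : X) (hpq : d_g p q < R * ε)
    (s : X)
    (hps : (8 * R)⁻¹ * ε ≤ d_g p s ∧ d_g p s ≤ 8 * R * ε)
    (hqs' : (8 * R)⁻¹ * ε ≤ d_g q s ∧ d_g q s ≤ 8 * R * ε)
    (h_ann : ∀ x y : X, (8 * R)⁻¹ * ε ≤ d_g x y → d_g x y ≤ 8 * R * ε →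
      (η 1 * (η (8 * R)) ^ 2)⁻¹ * lam x ≤ lam y ∧
        lam y ≤ η 1 * (η (8 * R)) ^ 2 * lam x) :
    ((η 1) ^ 2 * (η (8 * R)) ^ 4)⁻¹ * lam p ≤ lam q ∧
      lam q ≤ (η 1) ^ 2 * (η (8 * R)) ^ 4 * lam p := by
  obtain ⟨-, -, hsym, -⟩ := hg
  have hK : 0 < η 1 * (η (8 * R)) ^ 2 := by
    have h1 : (0:ℝ) < η 1 := hη_pos 1 one_pos
    have h2 : (0:ℝ) < η (8 * R) := hη_pos _ (by linarith)
    positivity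
  have h1 := h_ann p s hps.1 hps.2
  have h2 := h_ann s q (by rw [hsym s q]; exact hqs'.1) (by rw [hsym s q]; exact hqs'.2)
  set K := η 1 * (η (8 * R)) ^ 2 with hKdef
  have hC : (η 1) ^ 2 * (η (8 * R)) ^ 4 = K * K := by ring
  constructor
  · rw [hC, mul_inv]
    have hlow : K⁻¹ * (K⁻¹ * lam p) ≤ K⁻¹ * lam s :=
      mul_le_mul_of_nonneg_left h1.1 (inv_nonneg.2 hK.le)
    calc K⁻¹ * K⁻¹ * lam p = K⁻¹ * (K⁻¹ * lam p) := by ring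
      _ ≤ K⁻¹ * lam s := hlow
      _ ≤ lam q := h2.1
  · rw [hC]
    calc lam q ≤ K * lam s := h2.2
      _ ≤ K * (K * lam p) := mul_le_mul_of_nonneg_left h1.2 hK.le
      _ = K * K * lam p := by ring
end

section
/- Let X be a set with metrics d and ρ, and suppose (X,ρ) is a geodesic space. Let ε > 0 and suppose that for every pair p,q with ρ(p,q) ≥ ε/2 and every length-minimizing ρ-geodesic γ from p to q, any two points s, s' on γ with ε/2 ≤ ρ(s,s') < ε satisfy d(s,s') ≤ ρ(s,s'). Then d(p,q) ≤ ρ(p,q) for all p,q ∈ X with ρ(p,q) ≥ ε/2. -/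
/-- If `(X,ρ)` is geodesic and `d ≤ ρ` holds for pairs of points on minimizing
`ρ`-geodesics at `ρ`-distance in `[ε/2, ε)`, then `d(p,q) ≤ ρ(p,q)` whenever
`ρ(p,q) ≥ ε/2`. -/
theorem stmt12 {X : Type*} (d ρ : X → X → ℝ)
    (hd : IsMetric d) (hρ : IsMetric ρ)
    (ε : ℝ) (hε : 0 < ε)
    (hgeo : ∀ p q : X, ∃ γ : ℝ → X, γ 0 = p ∧ γ (ρ p q) = q ∧
      ∀ a ∈ Set.Icc 0 (ρ p q), ∀ b ∈ Set.Icc 0 (ρ p q),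
        ρ (γ a) (γ b) = |a - b|)
    (h : ∀ p q : X, ε / 2 ≤ ρ p q → ∀ γ : ℝ → X,
      (γ 0 = p ∧ γ (ρ p q) = q ∧
        ∀ a ∈ Set.Icc 0 (ρ p q), ∀ b ∈ Set.Icc 0 (ρ p q),
          ρ (γ a) (γ b) = |a - b|) →
      ∀ a ∈ Set.Icc 0 (ρ p q), ∀ b ∈ Set.Icc 0 (ρ p q),
        ε / 2 ≤ ρ (γ a) (γ b) → ρ (γ a) (γ b) < ε →
          d (γ a) (γ b) ≤ ρ (γ a) (γ b)) :
    ∀ p q : X, ε / 2 ≤ ρ p q → d p q ≤ ρ p q := by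
  have key : ∀ n : ℕ, ∀ p q : X, ε / 2 ≤ ρ p q → ρ p q < ε / 2 * (n + 2) →
      d p q ≤ ρ p q := by
    intro n
    induction n with
    | zero =>
      intro p q hpq hlt
      obtain ⟨γ, hγ0, hγ1, hγ⟩ := hgeo p q
      have h0 : (0:ℝ) ∈ Set.Icc 0 (ρ p q) := ⟨le_refl 0, le_trans (by positivity) hpq⟩
      have h1 : ρ p q ∈ Set.Icc 0 (ρ p q) := ⟨le_trans (by positivity) hpq, le_refl _⟩
      have hval : ρ (γ 0) (γ (ρ p q)) = ρ p q := by
        rw [hγ 0 h0 (ρ p q) h1, abs_of_nonpos (by linarith [h0.2]), neg_sub, sub_zero]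
      have := h p q hpq γ ⟨hγ0, hγ1, hγ⟩ 0 h0 (ρ p q) h1
        (by rw [hval]; exact hpq) (by rw [hval]; push_cast at hlt; linarith)
      rw [hγ0, hγ1] at this
      rwa [hγ0, hγ1] at hval
    | succ n ih =>
      intro p q hpq hlt
      by_cases hcase : ρ p q < ε
      · obtain ⟨γ, hγ0, hγ1, hγ⟩ := hgeo p q
        have h0 : (0:ℝ) ∈ Set.Icc 0 (ρ p q) := ⟨le_refl 0, le_trans (by positivity) hpq⟩
        have h1 : ρ p q ∈ Set.Icc 0 (ρ p q) := ⟨le_trans (by positivity) hpq, le_refl _⟩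
        have hval : ρ (γ 0) (γ (ρ p q)) = ρ p q := by
          rw [hγ 0 h0 (ρ p q) h1, abs_of_nonpos (by linarith [h0.2]), neg_sub, sub_zero]
        have := h p q hpq γ ⟨hγ0, hγ1, hγ⟩ 0 h0 (ρ p q) h1
          (by rw [hval]; exact hpq) (by rw [hval]; exact hcase)
        rw [hval, hγ0, hγ1] at this
        exact this
      · push_neg at hcase
        obtain ⟨γ, hγ0, hγ1, hγ⟩ := hgeo p q
        have h0 : (0:ℝ) ∈ Set.Icc 0 (ρ p q) := ⟨le_refl 0, le_trans (by positivity) hpq⟩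
        have h1 : ρ p q ∈ Set.Icc 0 (ρ p q) := ⟨le_trans (by positivity) hpq, le_refl _⟩
        have hm : (ε/2 : ℝ) ∈ Set.Icc 0 (ρ p q) := ⟨by positivity, by linarith⟩
        set s := γ (ε/2) with hs
        have hps : ρ p s = ε / 2 := by
          rw [hs, ← hγ0, hγ 0 h0 (ε/2) hm]
          rw [abs_of_nonpos (by linarith), neg_sub, sub_zero]
        have hsq : ρ s q = ρ p q - ε / 2 := by
          have := hγ (ε/2) hm (ρ p q) h1
          rw [hγ1, abs_of_nonpos (by linarith), neg_sub] at this
          rw [hs, this]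
        have hdps : d p s ≤ ε / 2 := by
          have := h p q hpq γ ⟨hγ0, hγ1, hγ⟩ 0 h0 (ε/2) hm
            (by rw [hγ0, ← hs, hps]) (by rw [hγ0, ← hs, hps]; linarith)
          rw [hγ0, ← hs, hps] at this
          exact this
        have hdsq : d s q ≤ ρ s q := by
          apply ih
          · rw [hsq]; linarith
          · rw [hsq]; push_cast; push_cast at hlt; linarith
        calc d p q ≤ d p s + d s q := hd.2.2.2 p s q
          _ ≤ ε / 2 + (ρ p q - ε / 2) := by rw [← hsq]; linarith
          _ = ρ p q := by ring
  intro p q hpq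
  obtain ⟨n, hn⟩ := exists_nat_gt (ρ p q / (ε / 2))
  apply key n p q hpq
  have h2 : (0:ℝ) < ε / 2 := by positivity
  calc ρ p q = ρ p q / (ε/2) * (ε/2) := by field_simp
    _ < n * (ε/2) := by exact mul_lt_mul_of_pos_right hn h2
    _ ≤ ε / 2 * (n + 2) := by nlinarith
end
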